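/- Let n ≥ 2, h ∈ [1, n−1], m ≥ 1, and A = (a_{i,j}) ∈ Ξ_{2n}. Let ν, ν' ∈ Λ(2n,m) satisfy ν_j ≤ a_{h,j} and ν'_j ≤ a_{h,j} for all j ∈ [1,2n]. If ν ⊴ ν' (dominance order), then A + ∑_{j=1}^{2n} ν_j (E^θ_{h+1,j} − E^θ_{h,j}) ⪯ A + ∑_{j=1}^{2n} ν'_j (E^θ_{h+1,j} − E^θ_{h,j}), and both of these matrices lie in Ξ_{2n}. -/

import Mathlib

/-!
Adding `∑_j ν_j (E^θ_{h+1,j} - E^θ_{h,j})` moves `ν` from row `h` to row `h+1` and the reversed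
`ν` from row `2n+1-h` to row `2n-h`. As `h < n` these four rows are distinct, so the result stays
nonnegative (`ν` fits under row `h` of `A`, and row `2n+1-h` is row `h` reversed) and
point-symmetric. In the block sum over `i ≤ u`, `j ≥ v` the moves cancel except at `u = h`, where
the block loses the tail `∑_{j ≥ v} ν_j`, and at `u = 2n-h`, where it gains the head
`∑_{j ≤ 2n+1-v} ν_j`. Since `ν ⊴ ν'` and both have total `m`, `ν'` has the smaller tails and the
larger heads.
-/

open Finset

/-- Entry of the matrix `E^θ_{i,j} = E_{i,j} + E_{2n+1-i,2n+1-j}` (size `2n`,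
`1`-based indexing), as an integer. -/
def EthZ (n i j : ℕ) : ℕ → ℕ → ℤ := fun k l =>
  (if k = i ∧ l = j then 1 else 0) + (if k = 2 * n + 1 - i ∧ l = 2 * n + 1 - j then 1 else 0)

/-- Entry of the matrix `A + ∑_{j=1}^{2n} ν_j (E^θ_{h+1,j} - E^θ_{h,j})`. -/
def shiftDownMat (n h : ℕ) (A : ℕ → ℕ → ℕ) (ν : ℕ → ℕ) : ℕ → ℕ → ℤ := fun k l =>
  (A k l : ℤ) + ∑ j ∈ Icc 1 (2 * n), (ν j : ℤ) * (EthZ n (h + 1) j k l - EthZ n h j k l)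

/-- The matrix `∑_j ν_j E^θ_{i,j}` (see `sum_mul_EthZ`). -/
def thetaRowMat (n i : ℕ) (ν : ℕ → ℕ) : ℕ → ℕ → ℤ := fun k l =>
  (if k = i then (ν l : ℤ) else 0) + (if k = 2 * n + 1 - i then (ν (2 * n + 1 - l) : ℤ) else 0)

theorem sum_mul_EthZ (n i : ℕ) (ν : ℕ → ℕ) {k l : ℕ} (hl : l ∈ Icc 1 (2 * n)) :
    ∑ j ∈ Icc 1 (2 * n), (ν j : ℤ) * EthZ n i j k l = thetaRowMat n i ν k l := by
  have hl' : 2 * n + 1 - l ∈ Icc 1 (2 * n) := by simp only [mem_Icc] at hl ⊢; omega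
  calc ∑ j ∈ Icc 1 (2 * n), (ν j : ℤ) * EthZ n i j k l
      = ∑ j ∈ Icc 1 (2 * n), ((if j = l then (if k = i then (ν j : ℤ) else 0) else 0)
          + (if j = 2 * n + 1 - l then (if k = 2 * n + 1 - i then (ν j : ℤ) else 0) else 0)) := by
        refine sum_congr rfl fun j hj => ?_
        simp only [mem_Icc] at hj hl
        simp only [EthZ]
        split_ifs <;> first | ring1 | omega
    _ = thetaRowMat n i ν k l := by
        rw [sum_add_distrib, sum_ite_eq', sum_ite_eq', if_pos hl, if_pos hl', thetaRowMat]

theorem shiftDownMat_eq (n h : ℕ) (A : ℕ → ℕ → ℕ) (ν : ℕ → ℕ) {k l : ℕ}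
    (hl : l ∈ Icc 1 (2 * n)) :
    shiftDownMat n h A ν k l = A k l + thetaRowMat n (h + 1) ν k l - thetaRowMat n h ν k l := by
  simp only [shiftDownMat, mul_sub, sum_sub_distrib, sum_mul_EthZ n _ ν hl, add_sub_assoc]

theorem thetaRowMat_reflect (n i : ℕ) (ν : ℕ → ℕ) {k l : ℕ} (hi : i ≤ 2 * n + 1)
    (hk : k ≤ 2 * n + 1) (hl : l ≤ 2 * n + 1) :
    thetaRowMat n i ν (2 * n + 1 - k) (2 * n + 1 - l) = thetaRowMat n i ν k l := by
  simp only [thetaRowMat, Nat.sub_sub_self hl]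
  split_ifs <;> first | ring1 | omega

theorem shiftDownMat_reflect (n h : ℕ) (hh : h ≤ 2 * n) (A : ℕ → ℕ → ℕ)
    (hA : ∀ i j, 1 ≤ i → i ≤ 2 * n → 1 ≤ j → j ≤ 2 * n →
      A i j = A (2 * n + 1 - i) (2 * n + 1 - j))
    (ν : ℕ → ℕ) {k l : ℕ} (hk : k ∈ Icc 1 (2 * n)) (hl : l ∈ Icc 1 (2 * n)) :
    shiftDownMat n h A ν (2 * n + 1 - k) (2 * n + 1 - l) = shiftDownMat n h A ν k l := by
  obtain ⟨hk1, hk2⟩ := mem_Icc.1 hk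
  obtain ⟨hl1, hl2⟩ := mem_Icc.1 hl
  rw [shiftDownMat_eq n h A ν hl, shiftDownMat_eq n h A ν (mem_Icc.2 ⟨by omega, by omega⟩),
    thetaRowMat_reflect n _ ν (by omega) (by omega) (by omega),
    thetaRowMat_reflect n _ ν (by omega) (by omega) (by omega), ← hA k l hk1 hk2 hl1 hl2]

theorem shiftDownMat_nonneg (n h : ℕ) (hh : h < n) (A : ℕ → ℕ → ℕ)
    (hA : ∀ i j, 1 ≤ i → i ≤ 2 * n → 1 ≤ j → j ≤ 2 * n →
      A i j = A (2 * n + 1 - i) (2 * n + 1 - j))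
    (ν : ℕ → ℕ) (hν : ∀ j, 1 ≤ j → j ≤ 2 * n → ν j ≤ A h j)
    {k l : ℕ} (hk : k ∈ Icc 1 (2 * n)) (hl : l ∈ Icc 1 (2 * n)) :
    0 ≤ shiftDownMat n h A ν k l := by
  rw [shiftDownMat_eq n h A ν hl]
  simp only [mem_Icc] at hk hl
  have hrow : k = h → ν l ≤ A k l := by
    rintro rfl; exact hν l hl.1 hl.2
  have hrow' : k = 2 * n + 1 - h → ν (2 * n + 1 - l) ≤ A k l := by
    rintro rfl
    rw [hA _ l (by omega) (by omega) hl.1 hl.2, Nat.sub_sub_self (by omega)]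
    exact hν _ (by omega) (by omega)
  simp only [thetaRowMat]
  split_ifs <;> omega

theorem shiftDownMat_nonneg_and_reflect (n h : ℕ) (hh : h < n) (A : ℕ → ℕ → ℕ)
    (hA : ∀ i j, 1 ≤ i → i ≤ 2 * n → 1 ≤ j → j ≤ 2 * n →
      A i j = A (2 * n + 1 - i) (2 * n + 1 - j))
    (ν : ℕ → ℕ) (hν : ∀ j, 1 ≤ j → j ≤ 2 * n → ν j ≤ A h j) :
    ∀ k l, 1 ≤ k → k ≤ 2 * n → 1 ≤ l → l ≤ 2 * n →
      0 ≤ shiftDownMat n h A ν k l ∧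
        shiftDownMat n h A ν k l = shiftDownMat n h A ν (2 * n + 1 - k) (2 * n + 1 - l) :=
  fun _ _ hk1 hk2 hl1 hl2 =>
    ⟨shiftDownMat_nonneg n h hh A hA ν hν (mem_Icc.2 ⟨hk1, hk2⟩) (mem_Icc.2 ⟨hl1, hl2⟩),
      (shiftDownMat_reflect n h (by omega) A hA ν (mem_Icc.2 ⟨hk1, hk2⟩)
        (mem_Icc.2 ⟨hl1, hl2⟩)).symm⟩

theorem sum_Icc_reflect {M : Type*} [AddCommMonoid M] (N v : ℕ) (f : ℕ → M) (hv : 1 ≤ v) :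
    ∑ j ∈ Icc v N, f (N + 1 - j) = ∑ j ∈ Icc 1 (N + 1 - v), f j := by
  apply sum_nbij' (fun j => N + 1 - j) (fun j => N + 1 - j) <;> intro j hj <;>
    simp only [mem_Icc] at hj ⊢ <;> omega

theorem sum_block_thetaRowMat (n r : ℕ) (ν : ℕ → ℕ) (u : ℕ) {v : ℕ} (hv : 1 ≤ v) :
    ∑ i ∈ Icc 1 u, ∑ j ∈ Icc v (2 * n), thetaRowMat n r ν i j =
      (if r ∈ Icc 1 u then ∑ j ∈ Icc v (2 * n), (ν j : ℤ) else 0) +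
      (if 2 * n + 1 - r ∈ Icc 1 u then ∑ j ∈ Icc 1 (2 * n + 1 - v), (ν j : ℤ) else 0) := by
  simp only [thetaRowMat, sum_add_distrib, sum_ite_irrel, sum_const_zero, sum_ite_eq',
    sum_Icc_reflect (2 * n) v (fun j => (ν j : ℤ)) hv]

theorem sum_block_shiftDownMat (n h : ℕ) (A : ℕ → ℕ → ℕ) (ν : ℕ → ℕ) (u : ℕ) {v : ℕ}
    (hv : 1 ≤ v) :
    ∑ i ∈ Icc 1 u, ∑ j ∈ Icc v (2 * n), shiftDownMat n h A ν i j =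
      ∑ i ∈ Icc 1 u, ∑ j ∈ Icc v (2 * n), (A i j : ℤ) +
        ∑ i ∈ Icc 1 u, ∑ j ∈ Icc v (2 * n), thetaRowMat n (h + 1) ν i j -
        ∑ i ∈ Icc 1 u, ∑ j ∈ Icc v (2 * n), thetaRowMat n h ν i j := by
  rw [← sum_add_distrib, ← sum_sub_distrib]
  refine sum_congr rfl fun i _ => ?_
  rw [← sum_add_distrib, ← sum_sub_distrib]
  refine sum_congr rfl fun j hj => shiftDownMat_eq n h A ν ?_
  simp only [mem_Icc] at hj ⊢; omega

theorem sum_Icc_tail_le_of_head_le {N v : ℕ} {f g : ℕ → ℕ} (hv : 1 ≤ v) (hvN : v ≤ N + 1)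
    (htot : ∑ j ∈ Icc 1 N, f j = ∑ j ∈ Icc 1 N, g j)
    (hhead : ∑ j ∈ Icc 1 (v - 1), f j ≤ ∑ j ∈ Icc 1 (v - 1), g j) :
    ∑ j ∈ Icc v N, g j ≤ ∑ j ∈ Icc v N, f j := by
  have split (φ : ℕ → ℕ) :
      ∑ j ∈ Icc 1 (v - 1), φ j + ∑ j ∈ Icc v N, φ j = ∑ j ∈ Icc 1 N, φ j := by
    rw [← Ico_add_one_right_eq_Icc, ← Ico_add_one_right_eq_Icc, ← Ico_add_one_right_eq_Icc,
      Nat.sub_add_cancel hv, sum_Ico_consecutive _ hv hvN]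
  have := split f
  have := split g
  omega

theorem shiftDown_prec_of_dominance_general (n : ℕ) (h : ℕ) (hh1 : 1 ≤ h)
    (hh2 : h ≤ n - 1) (m : ℕ) (A : ℕ → ℕ → ℕ)
    (hA : ∀ i j, 1 ≤ i → i ≤ 2 * n → 1 ≤ j → j ≤ 2 * n →
      A i j = A (2 * n + 1 - i) (2 * n + 1 - j))
    (ν ν' : ℕ → ℕ)
    (hνsum : ∑ j ∈ Icc 1 (2 * n), ν j = m) (hν'sum : ∑ j ∈ Icc 1 (2 * n), ν' j = m)
    (hνle : ∀ j, 1 ≤ j → j ≤ 2 * n → ν j ≤ A h j)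
    (hν'le : ∀ j, 1 ≤ j → j ≤ 2 * n → ν' j ≤ A h j)
    (hdom : ∀ t, 1 ≤ t → t ≤ 2 * n → (∑ j ∈ Icc 1 t, ν j) ≤ ∑ j ∈ Icc 1 t, ν' j) :
    -- the first matrix lies in Ξ_{2n}
    ((∀ k l, 1 ≤ k → k ≤ 2 * n → 1 ≤ l → l ≤ 2 * n →
        0 ≤ shiftDownMat n h A ν k l ∧
        shiftDownMat n h A ν k l = shiftDownMat n h A ν (2 * n + 1 - k) (2 * n + 1 - l))
    -- the second matrix lies in Ξ_{2n}
    ∧ (∀ k l, 1 ≤ k → k ≤ 2 * n → 1 ≤ l → l ≤ 2 * n →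
        0 ≤ shiftDownMat n h A ν' k l ∧
        shiftDownMat n h A ν' k l = shiftDownMat n h A ν' (2 * n + 1 - k) (2 * n + 1 - l))
    -- the preorder relation
    ∧ (∀ u v, 1 ≤ u → u < v → v ≤ 2 * n →
        (∑ i ∈ Icc 1 u, ∑ j ∈ Icc v (2 * n), shiftDownMat n h A ν i j)
          ≤ ∑ i ∈ Icc 1 u, ∑ j ∈ Icc v (2 * n), shiftDownMat n h A ν' i j)) := by
  have hhn : h < n := by omega
  refine ⟨shiftDownMat_nonneg_and_reflect n h hhn A hA ν hνle,
    shiftDownMat_nonneg_and_reflect n h hhn A hA ν' hν'le, fun u v hu huv hv => ?_⟩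
  have htail : ∑ j ∈ Icc v (2 * n), (ν' j : ℤ) ≤ ∑ j ∈ Icc v (2 * n), (ν j : ℤ) := by
    exact_mod_cast sum_Icc_tail_le_of_head_le (by omega) (by omega) (hνsum.trans hν'sum.symm)
      (hdom (v - 1) (by omega) (by omega))
  have hhead :
      ∑ j ∈ Icc 1 (2 * n + 1 - v), (ν j : ℤ) ≤ ∑ j ∈ Icc 1 (2 * n + 1 - v), (ν' j : ℤ) := by
    exact_mod_cast hdom (2 * n + 1 - v) (by omega) (by omega)
  simp only [sum_block_shiftDownMat n h A _ u (show 1 ≤ v by omega),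
    sum_block_thetaRowMat n _ _ u (show 1 ≤ v by omega), mem_Icc]
  split_ifs <;> omega

/-- Let `h ∈ [1, n-1]`, `A ∈ Ξ_{2n}` and `ν, ν' ∈ Λ(2n,m)` with `ν_j, ν'_j ≤ a_{h,j}`.
If `ν ⊴ ν'` then `A + ∑_j ν_j (E^θ_{h+1,j} - E^θ_{h,j}) ⪯ A + ∑_j ν'_j (E^θ_{h+1,j} - E^θ_{h,j})`,
and both matrices lie in `Ξ_{2n}` (nonnegative, point-symmetric entries). -/
theorem shiftDown_prec_of_dominance (n : ℕ) (hn : 2 ≤ n) (h : ℕ) (hh1 : 1 ≤ h)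
    (hh2 : h ≤ n - 1) (m : ℕ) (hm : 1 ≤ m) (A : ℕ → ℕ → ℕ)
    (hA : ∀ i j, 1 ≤ i → i ≤ 2 * n → 1 ≤ j → j ≤ 2 * n →
      A i j = A (2 * n + 1 - i) (2 * n + 1 - j))
    (ν ν' : ℕ → ℕ)
    (hνsum : ∑ j ∈ Icc 1 (2 * n), ν j = m) (hν'sum : ∑ j ∈ Icc 1 (2 * n), ν' j = m)
    (hνle : ∀ j, 1 ≤ j → j ≤ 2 * n → ν j ≤ A h j)
    (hν'le : ∀ j, 1 ≤ j → j ≤ 2 * n → ν' j ≤ A h j)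
    (hdom : ∀ t, 1 ≤ t → t ≤ 2 * n → (∑ j ∈ Icc 1 t, ν j) ≤ ∑ j ∈ Icc 1 t, ν' j) :
    -- the first matrix lies in Ξ_{2n}
    ((∀ k l, 1 ≤ k → k ≤ 2 * n → 1 ≤ l → l ≤ 2 * n →
        0 ≤ shiftDownMat n h A ν k l ∧
        shiftDownMat n h A ν k l = shiftDownMat n h A ν (2 * n + 1 - k) (2 * n + 1 - l))
    -- the second matrix lies in Ξ_{2n}
    ∧ (∀ k l, 1 ≤ k → k ≤ 2 * n → 1 ≤ l → l ≤ 2 * n →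
        0 ≤ shiftDownMat n h A ν' k l ∧
        shiftDownMat n h A ν' k l = shiftDownMat n h A ν' (2 * n + 1 - k) (2 * n + 1 - l))
    -- the preorder relation
    ∧ (∀ u v, 1 ≤ u → u < v → v ≤ 2 * n →
        (∑ i ∈ Icc 1 u, ∑ j ∈ Icc v (2 * n), shiftDownMat n h A ν i j)
          ≤ ∑ i ∈ Icc 1 u, ∑ j ∈ Icc v (2 * n), shiftDownMat n h A ν' i j)) :=
  shiftDown_prec_of_dominance_general n h hh1 hh2 m A hA ν ν' hνsum hν'sum hνle hν'le hdom
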